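/- Compatibility of k-NRCS steps with the induced-subtree ordering: let N be a k-NRCS, let t be a transition of N, and let C, C', D be configurations of N. If C →_t C' is a step of N and C ≤_is D, then there exists a configuration D' such that D →_t D' is a step of N and C' ≤_is D'. -/

import Mathlib

/-- Finite rooted ordered representation of finite rooted *unordered* labelled trees.
Unorderedness is handled by comparing trees up to permutation of children. -/
inductive STree (Q : Type) : Type
  | node (label : Q) (children : List (STree Q)) : STree Q

namespace STree

variable {Q : Type}

/-- The label of the root. -/
def rootLabel : STree Q → Q
  | node a _ => a

/-- The children of the root. -/
def children : STree Q → List (STree Q)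
  | node _ ts => ts

end STree

mutual
  /-- Number of nodes. -/
  def STree.size {Q : Type} : STree Q → ℕ
    | .node _ ts => 1 + STree.sizeL ts
  /-- Total number of nodes of a list of trees. -/
  def STree.sizeL {Q : Type} : List (STree Q) → ℕ
    | [] => 0
    | t :: ts => STree.size t + STree.sizeL ts
end

mutual
  /-- Height (a single node has height 0). -/
  def STree.height {Q : Type} : STree Q → ℕ
    | .node _ ts => STree.heightL ts
  /-- One plus the maximal height of a list of trees (0 for the empty list). -/
  def STree.heightL {Q : Type} : List (STree Q) → ℕ
    | [] => 0
    | t :: ts => max (STree.height t + 1) (STree.heightL ts)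
end

namespace STree

end STree

mutual
  /-- `TreeLe C C'` is the induced-subtree ordering `C ≤_is C'`: `C` is obtained from `C'`
  by deleting whole subtrees (equivalently, there is a root-preserving, label-preserving
  injection of the nodes of `C` into the nodes of `C'` such that two nodes are adjacent in
  `C` iff their images are adjacent in `C'`). -/
  inductive TreeLe {Q : Type} : STree Q → STree Q → Prop
    | node {a : Q} {ts us : List (STree Q)} :
        ForestLe ts us → TreeLe (.node a ts) (.node a us)

  /-- An (unordered) embedding of a list of trees into another: an injection matching each
  tree on the left with a distinct tree on the right that dominates it w.r.t. `TreeLe`. -/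
  inductive ForestLe {Q : Type} : List (STree Q) → List (STree Q) → Prop
    | nil (us : List (STree Q)) : ForestLe [] us
    | cons {t u : STree Q} {ts us : List (STree Q)} :
        TreeLe t u → ForestLe ts us → ForestLe (t :: ts) (u :: us)
    | skip {u : STree Q} {ts us : List (STree Q)} :
        ForestLe ts us → ForestLe ts (u :: us)
    | permR {ts us us' : List (STree Q)} :
        ForestLe ts us → us.Perm us' → ForestLe ts us'
end

mutual
  /-- Equality of trees as finite rooted *unordered* labelled trees. -/
  inductive TreeEquiv {Q : Type} : STree Q → STree Q → Prop
    | node {a : Q} {ts us : List (STree Q)} :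
        ForestEquiv ts us → TreeEquiv (.node a ts) (.node a us)

  /-- Lists of trees matched bijectively (up to permutation) by `TreeEquiv`. -/
  inductive ForestEquiv {Q : Type} : List (STree Q) → List (STree Q) → Prop
    | nil : ForestEquiv [] []
    | cons {t u : STree Q} {ts us : List (STree Q)} :
        TreeEquiv t u → ForestEquiv ts us → ForestEquiv (t :: ts) (u :: us)
    | permR {ts us us' : List (STree Q)} :
        ForestEquiv ts us → us.Perm us' → ForestEquiv ts us'
end

/-- `HasPath ps t` : there is a path from the root of `t` (inclusive) whose successive
labels are exactly the (nonempty) list `ps`. -/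
inductive HasPath {Q : Type} : List Q → STree Q → Prop
  | single (p : Q) (ts : List (STree Q)) : HasPath [p] (.node p ts)
  | cons (p : Q) {ps : List Q} {ts : List (STree Q)} {t : STree Q} :
      t ∈ ts → HasPath ps t → HasPath (p :: ps) (.node p ts)

/-- `mkChain q qs` is the path-shaped tree with labels `q, qs...`. -/
def mkChain {Q : Type} : Q → List Q → STree Q
  | q, [] => .node q []
  | q, r :: rest => .node q [mkChain r rest]

/-- Attach the (possibly empty) fresh chain labelled `qs` as a new child. -/
def attachChain {Q : Type} : List Q → List (STree Q) → List (STree Q)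
  | [], ts => ts
  | r :: rest, ts => mkChain r rest :: ts

/-- Application of an update transition `(p_0,…,p_i) →u (q_0,…,q_j)` (given as the two label
lists) to a configuration: fire along a root path labelled `p_0,…,p_i`, relabel the common
prefix, and either create fresh nodes labelled `q_{i+1},…,q_j` (if `i ≤ j`) or delete the
subtree rooted at `v_{j+1}` (if `j < i`). -/
inductive UStep {Q : Type} : List Q → List Q → STree Q → STree Q → Prop
  | last (p q : Q) (rest : List Q) (ts : List (STree Q)) :
      UStep [p] (q :: rest) (.node p ts) (.node q (attachChain rest ts))
  | delete (p q : Q) {ps : List Q} (hps : ps ≠ []) {t : STree Q} (l r : List (STree Q)) :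
      HasPath ps t →
      UStep (p :: ps) [q] (.node p (l ++ t :: r)) (.node q (l ++ r))
  | go (p q : Q) {ps qs : List Q} (hps : ps ≠ []) (hqs : qs ≠ []) {t t' : STree Q}
      (l r : List (STree Q)) :
      UStep ps qs t t' →
      UStep (p :: ps) (q :: qs) (.node p (l ++ t :: r)) (.node q (l ++ t' :: r))

/-- Application of a reset transition `(p_0,…,p_i) →r,x (q_0,…,q_i)` to a configuration:
fire along a root path labelled `p_0,…,p_i`, relabel it to `q_0,…,q_i`, and delete every
subtree rooted at a child of the last path node whose label is `x`. -/
inductive RStep {Q : Type} [DecidableEq Q] : List Q → Q → List Q → STree Q → STree Q → Prop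
  | last (p q x : Q) (ts : List (STree Q)) :
      RStep [p] x [q] (.node p ts) (.node q (ts.filter (fun t => t.rootLabel ≠ x)))
  | go (p q x : Q) {ps qs : List Q} (hps : ps ≠ []) {t t' : STree Q} (l r : List (STree Q)) :
      RStep ps x qs t t' →
      RStep (p :: ps) x (q :: qs) (.node p (l ++ t :: r)) (.node q (l ++ t' :: r))

/-- A transition of a `k`-NRCS : either an update transition or a reset transition,
presented by its label lists. -/
inductive NTrans (Q : Type) : Type
  | upd (ps qs : List Q) : NTrans Q
  | rst (ps : List Q) (x : Q) (qs : List Q) : NTrans Q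

/-- A `k`-NRCS `(Q, δ_u, δ_r)` : a finite set of update transitions
`δ_u ⊆ ⋃_{1 ≤ i,j ≤ k+1} Q^i × Q^j` and a finite set of reset transitions
`δ_r ⊆ ⋃_{1 ≤ i ≤ k} Q^i × Q × Q^i` (the state set is the ambient type `Q`). -/
structure NRCS (Q : Type) [DecidableEq Q] (k : ℕ) where
  update : Finset (List Q × List Q)
  reset : Finset (List Q × Q × List Q)
  update_wf : ∀ t ∈ update, 1 ≤ t.1.length ∧ t.1.length ≤ k + 1 ∧
      1 ≤ t.2.length ∧ t.2.length ≤ k + 1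
  reset_wf : ∀ t ∈ reset, 1 ≤ t.1.length ∧ t.1.length ≤ k ∧ t.2.2.length = t.1.length

namespace NRCS

variable {Q : Type} [DecidableEq Q] {k : ℕ}

/-- Membership of a transition in an NRCS. -/
def hasTrans (N : NRCS Q k) : NTrans Q → Prop
  | .upd ps qs => (ps, qs) ∈ N.update
  | .rst ps x qs => (ps, x, qs) ∈ N.reset

/-- `C →_t C'` : a step via the particular transition `t`. -/
def TransStep : NTrans Q → STree Q → STree Q → Prop
  | .upd ps qs, C, C' => UStep ps qs C C'
  | .rst ps x qs, C, C' => RStep ps x qs C C'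

/-- The step relation `C → C'` of the NRCS `N`. -/
def Step (N : NRCS Q k) (C C' : STree Q) : Prop :=
  ∃ t : NTrans Q, N.hasTrans t ∧ TransStep t C C'

/-- Reachability `C →* C'` (reflexive-transitive closure of the step relation). -/
def Reaches (N : NRCS Q k) : STree Q → STree Q → Prop :=
  Relation.ReflTransGen N.Step

/-- The lossy step relation: first delete some whole subtrees, then take a standard step. -/
def LossyStep (N : NRCS Q k) (C D : STree Q) : Prop :=
  ∃ C₀ : STree Q, TreeLe C₀ C ∧ N.Step C₀ D

/-- Lossy reachability. -/
def LossyReaches (N : NRCS Q k) : STree Q → STree Q → Prop :=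
  Relation.ReflTransGen N.LossyStep

end NRCS

/-!
A step only touches one root path and the children of its last node. If `C ≤_is D`, the
embedding maps that path of `C` onto a path of `D` with the same labels, so the transition also
fires in `D`. The embedding of the untouched children survives, a freshly attached chain is
matched with its copy, a deleted child subtree is deleted together with its image, and a reset
keeps the image of every child it keeps, because the embedding preserves root labels.
-/

section Embedding

variable {Q : Type}

mutual
  theorem TreeLe.refl : ∀ t : STree Q, TreeLe t t
    | .node _ ts => .node (ForestLe.refl ts)
  theorem ForestLe.refl : ∀ ts : List (STree Q), ForestLe ts ts
    | [] => .nil _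
    | t :: ts => .cons (TreeLe.refl t) (ForestLe.refl ts)
end

/-- Induction on `ForestLe` alone; the recursor of the mutual block also wants a motive on
`TreeLe`. -/
@[elab_as_elim]
theorem ForestLe.induction {P : ∀ ts us : List (STree Q), ForestLe ts us → Prop}
    {ts us : List (STree Q)} (h : ForestLe ts us)
    (nil : ∀ us, P [] us (.nil us))
    (cons : ∀ {t u ts us} (htu : TreeLe t u) (h : ForestLe ts us),
      P ts us h → P (t :: ts) (u :: us) (.cons htu h))
    (skip : ∀ {u ts us} (h : ForestLe ts us), P ts us h → P ts (u :: us) (.skip h))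
    (permR : ∀ {ts us us'} (h : ForestLe ts us) (hp : us.Perm us'),
      P ts us h → P ts us' (.permR h hp)) :
    P ts us h :=
  ForestLe.rec (motive_1 := fun _ _ _ => True) (motive_2 := P) (fun _ _ => trivial)
    nil (fun htu h _ ih => cons htu h ih) skip permR h

theorem ForestLe.exists_of_cons {t : STree Q} {ts us : List (STree Q)}
    (h : ForestLe (t :: ts) us) :
    ∃ u us', us.Perm (u :: us') ∧ TreeLe t u ∧ ForestLe ts us' := by
  generalize hts : t :: ts = ts₀ at h
  induction h using ForestLe.induction generalizing ts with
  | nil => cases hts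
  | cons htu h =>
    obtain ⟨rfl, rfl⟩ := List.cons.inj hts
    exact ⟨_, _, .refl _, htu, h⟩
  | skip _ ih =>
    obtain ⟨u, us', hperm, htu, h⟩ := ih hts
    exact ⟨u, _ :: us', (hperm.cons _).trans (.swap _ _ _), htu, .skip h⟩
  | permR _ hp ih =>
    obtain ⟨u, us', hperm, htu, h⟩ := ih hts
    exact ⟨u, us', hp.symm.trans hperm, htu, h⟩

theorem ForestLe.perm_left {ts ts' us : List (STree Q)} (hp : ts.Perm ts')
    (h : ForestLe ts us) : ForestLe ts' us := by
  induction hp generalizing us with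
  | nil => exact h
  | cons _ _ ih =>
    obtain ⟨u, us', hperm, htu, h⟩ := h.exists_of_cons
    exact .permR (.cons htu (ih h)) hperm.symm
  | swap =>
    obtain ⟨u, us₁, hperm₁, htu, h⟩ := h.exists_of_cons
    obtain ⟨v, us₂, hperm₂, htv, h⟩ := h.exists_of_cons
    exact .permR (.cons htv (.cons htu h))
      ((List.Perm.swap _ _ _).trans ((hperm₂.cons u).symm.trans hperm₁.symm))
  | trans _ _ ih₁ ih₂ => exact ih₂ (ih₁ h)

theorem ForestLe.exists_split {t : STree Q} {l r us : List (STree Q)}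
    (h : ForestLe (l ++ t :: r) us) :
    ∃ l' u r', us = l' ++ u :: r' ∧ TreeLe t u ∧ ForestLe (l ++ r) (l' ++ r') := by
  obtain ⟨u, us', hperm, htu, hrest⟩ := (h.perm_left List.perm_middle).exists_of_cons
  obtain ⟨l', r', rfl⟩ := List.append_of_mem (hperm.symm.subset List.mem_cons_self)
  exact ⟨l', u, r', rfl, htu, .permR hrest (hperm.symm.trans List.perm_middle).cons_inv⟩

theorem ForestLe.insert {t u : STree Q} {l r l' r' : List (STree Q)}
    (htu : TreeLe t u) (h : ForestLe (l ++ r) (l' ++ r')) :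
    ForestLe (l ++ t :: r) (l' ++ u :: r') :=
  (ForestLe.permR (.cons htu h) List.perm_middle.symm).perm_left List.perm_middle.symm

theorem ForestLe.exists_treeLe_of_mem {t : STree Q} {ts us : List (STree Q)}
    (h : ForestLe ts us) (ht : t ∈ ts) : ∃ u ∈ us, TreeLe t u := by
  obtain ⟨l, r, rfl⟩ := List.append_of_mem ht
  obtain ⟨l', u, r', rfl, htu, -⟩ := h.exists_split
  exact ⟨u, List.mem_append_right _ List.mem_cons_self, htu⟩

theorem ForestLe.filter (p : STree Q → Bool) (hp : ∀ t u, TreeLe t u → p t = p u)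
    {ts us : List (STree Q)} (h : ForestLe ts us) :
    ForestLe (ts.filter p) (us.filter p) := by
  induction h using ForestLe.induction with
  | nil => exact .nil _
  | @cons t u _ _ htu _ ih =>
    rw [List.filter_cons, List.filter_cons, hp t u htu]
    split
    · exact .cons htu ih
    · exact ih
  | @skip u _ _ _ ih =>
    rw [List.filter_cons]
    split
    · exact .skip ih
    · exact ih
  | permR _ hperm ih => exact .permR ih (hperm.filter p)

theorem TreeLe.rootLabel_eq {t u : STree Q} (h : TreeLe t u) : t.rootLabel = u.rootLabel := by
  cases h
  rfl

theorem TreeLe.exists_split {a : Q} {t D : STree Q} {l r : List (STree Q)}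
    (h : TreeLe (.node a (l ++ t :: r)) D) :
    ∃ l' u r', D = .node a (l' ++ u :: r') ∧ TreeLe t u ∧ ForestLe (l ++ r) (l' ++ r') := by
  cases h with
  | node h =>
    obtain ⟨l', u, r', rfl, htu, hrest⟩ := h.exists_split
    exact ⟨l', u, r', rfl, htu, hrest⟩

theorem HasPath.mono {ps : List Q} {t u : STree Q} (h : HasPath ps t) (htu : TreeLe t u) :
    HasPath ps u := by
  induction h generalizing u with
  | single => cases htu with | node => exact .single ..
  | cons p ht _ ih =>
    cases htu with
    | node h =>
      obtain ⟨u, hu, htu⟩ := h.exists_treeLe_of_mem ht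
      exact .cons p hu (ih htu)

end Embedding

section Steps

variable {Q : Type}

theorem UStep.exists_of_treeLe {ps qs : List Q} {C C' D : STree Q}
    (hstep : UStep ps qs C C') (hle : TreeLe C D) :
    ∃ D', UStep ps qs D D' ∧ TreeLe C' D' := by
  induction hstep generalizing D with
  | last p q rest =>
    cases hle with
    | @node _ _ us h =>
      refine ⟨_, .last p q rest us, .node ?_⟩
      cases rest with
      | nil => exact h
      | cons => exact .cons (TreeLe.refl _) h
  | delete p q hps l r hpath =>
    obtain ⟨l', u, r', rfl, htu, hrest⟩ := hle.exists_split
    exact ⟨_, .delete p q hps l' r' (hpath.mono htu), .node hrest⟩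
  | go p q hps hqs l r _ ih =>
    obtain ⟨l', u, r', rfl, htu, hrest⟩ := hle.exists_split
    obtain ⟨u', hstep', hu'⟩ := ih htu
    exact ⟨_, .go p q hps hqs l' r' hstep', .node (hrest.insert hu')⟩

theorem RStep.exists_of_treeLe [DecidableEq Q] {ps qs : List Q} {x : Q} {C C' D : STree Q}
    (hstep : RStep ps x qs C C') (hle : TreeLe C D) :
    ∃ D', RStep ps x qs D D' ∧ TreeLe C' D' := by
  induction hstep generalizing D with
  | last p q x =>
    cases hle with
    | @node _ _ us h =>
      refine ⟨_, .last p q x us, .node (h.filter _ fun t u htu => ?_)⟩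
      rw [htu.rootLabel_eq]
  | go p q x hps l r _ ih =>
    obtain ⟨l', u, r', rfl, htu, hrest⟩ := hle.exists_split
    obtain ⟨u', hstep', hu'⟩ := ih htu
    exact ⟨_, .go p q x hps l' r' hstep', .node (hrest.insert hu')⟩

end Steps

/-- Compatibility of `k`-NRCS steps with the induced-subtree ordering:
let `N` be a `k`-NRCS, `t` a transition of `N`, and `C, C', D` configurations of `N`
(trees of height at most `k`). If `C →_t C'` is a step of `N` and `C ≤_is D`, then there
exists a configuration `D'` such that `D →_t D'` is a step of `N` and `C' ≤_is D'`. -/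
theorem nrcs_step_compatibility
    {Q : Type} [DecidableEq Q] [Fintype Q] {k : ℕ} (hk : 1 ≤ k)
    (N : NRCS Q k) (t : NTrans Q) (ht : N.hasTrans t)
    (C C' D : STree Q) (hC : C.height ≤ k) (hD : D.height ≤ k)
    (hstep : NRCS.TransStep t C C') (hle : TreeLe C D) :
    ∃ D' : STree Q, NRCS.TransStep t D D' ∧ TreeLe C' D' := by
  cases t with
  | upd => exact UStep.exists_of_treeLe hstep hle
  | rst => exact RStep.exists_of_treeLe hstep hle
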